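/- Let p > 2, and let H be a real inner product space. Suppose u, v̄ ∈ L^p(μ) for a σ-finite measure μ, ∫|v̄|^{p-2}v̄(u - v̄) dμ = 0, and ‖v̄‖_{L^p(μ)} ≤ ‖u‖_{L^p(μ)}. Then for every κ > 0 there is c₁ = c₁(p,κ) > 0 with ‖u‖_{L^p(μ)}^p ≤ ‖v̄‖_{L^p(μ)}^p + (p(p-1)/2 + κ)·‖v̄‖_{L^p(μ)}^{p-2}·‖u - v̄‖_{L^p(μ)}^2 + c₁·‖u - v̄‖_{L^p(μ)}^p. -/

import Mathlib

/-!
Pointwise, `|a + b|^p ≤ |a|^p + p|a|^(p-2)ab + (p(p-1)/2 + κ)|a|^(p-2)b² + c|b|^p`, and by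
homogeneity it suffices to take `a = 1`. For `|b| ≤ δ` this is the second-order Taylor bound,
whose constant `p(p-1)/2 · (1+δ)^(p-2)` is below `p(p-1)/2 + κ` for small `δ`; for `|b| > δ` the
quadratic part is nonnegative and `|1 + b| ≤ (1 + 1/δ)|b|`. Integrating with `a = v̄`, `b = u - v̄`,
the linear term vanishes by orthogonality and Hölder with exponents `p/(p-2)` and `p/2` bounds
the quadratic one. Since `u` and `v̄` are only known through `|u|`, `|v̄|` and the orthogonality
integrand, measurability of `|u - v̄|` is read off from these.
-/

open Real Set Filter Topology MeasureTheory
open scoped ENNReal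

lemma one_add_rpow_le_of_abs_le {p δ b : ℝ} (hp : 2 ≤ p) (hδ₀ : 0 < δ) (hδ₁ : δ < 1)
    (hb : |b| ≤ δ) :
    (1 + b) ^ p ≤ 1 + p * b + p * (p - 1) / 2 * (1 + δ) ^ (p - 2) * b ^ 2 := by
  set M := p * (p - 1) * (1 + δ) ^ (p - 2)
  set φ : ℝ → ℝ := fun t => 1 + p * t + M / 2 * t ^ 2 - (1 + t) ^ p
  set φ' : ℝ → ℝ := fun t => p + M * t - p * (1 + t) ^ (p - 1)
  set φ'' : ℝ → ℝ := fun t => p * (p - 1) * ((1 + δ) ^ (p - 2) - (1 + t) ^ (p - 2))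
  have hpos : ∀ t ∈ Ioo (-δ) δ, 0 < 1 + t := fun t ht => by linarith [ht.1]
  have hφ' : ∀ t ∈ Ioo (-δ) δ, HasDerivAt φ (φ' t) t := by
    intro t ht
    have h := ((hasDerivAt_id t).const_add 1).rpow_const (p := p) (Or.inl (hpos t ht).ne')
    refine (((((hasDerivAt_id t).const_mul p).const_add 1).add
      ((hasDerivAt_pow 2 t).const_mul (M / 2))).sub h).congr_deriv ?_
    simp only [id, φ']; ring
  have hφ'' : ∀ t ∈ Ioo (-δ) δ, HasDerivAt φ' (φ'' t) t := by
    intro t ht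
    have h := ((hasDerivAt_id t).const_add 1).rpow_const (p := p - 1) (Or.inl (hpos t ht).ne')
    refine ((((hasDerivAt_id t).const_mul M).const_add p).sub (h.const_mul p)).congr_deriv ?_
    rw [show p - 1 - 1 = p - 2 by ring]
    simp only [id, M, φ'']; ring
  have hconv : ConvexOn ℝ (Icc (-δ) δ) φ := by
    have hp₀ : 0 ≤ p := by linarith
    refine convexOn_of_hasDerivWithinAt2_nonneg (f' := φ') (f'' := φ'') (convex_Icc _ _)
      (Continuous.continuousOn (by fun_prop (disch := assumption))) ?_ ?_ ?_ <;>
      rw [interior_Icc]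
    · exact fun t ht => (hφ' t ht).hasDerivWithinAt
    · exact fun t ht => (hφ'' t ht).hasDerivWithinAt
    · intro t ht
      have hle : (1 + t) ^ (p - 2) ≤ (1 + δ) ^ (p - 2) :=
        rpow_le_rpow (hpos t ht).le (by linarith [ht.2]) (by linarith)
      exact mul_nonneg (by nlinarith) (sub_nonneg.2 hle)
  have h0 : (0 : ℝ) ∈ Ioo (-δ) δ := ⟨by linarith, hδ₀⟩
  have hmin : IsMinOn φ (Icc (-δ) δ) 0 :=
    hconv.isMinOn_of_rightDeriv_eq_zero (by rwa [interior_Icc]) <| by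
      simpa [φ'] using ((hφ' 0 h0).hasDerivWithinAt (s := Ioi 0)).derivWithin
        (uniqueDiffWithinAt_Ioi 0)
  have hφb : φ 0 ≤ φ b := hmin (abs_le.1 hb)
  have hφ0 : φ 0 = 0 := by simp [φ]
  rw [hφ0] at hφb
  simp only [φ, M] at hφb
  linarith

lemma exists_abs_one_add_rpow_le {p κ : ℝ} (hp : 2 ≤ p) (hκ : 0 < κ) :
    ∃ c ≥ (1 : ℝ), ∀ b : ℝ,
      |1 + b| ^ p ≤ 1 + p * b + (p * (p - 1) / 2 + κ) * b ^ 2 + c * |b| ^ p := by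
  have hp₀ : 0 ≤ p := by linarith
  have hp₂ : 0 ≤ p - 2 := by linarith
  have hlim : Tendsto (fun δ : ℝ => p * (p - 1) / 2 * (1 + δ) ^ (p - 2)) (𝓝[>] 0)
      (𝓝 (p * (p - 1) / 2)) := by
    have hcont : Continuous fun δ : ℝ => p * (p - 1) / 2 * (1 + δ) ^ (p - 2) := by
      fun_prop (disch := assumption)
    exact (hcont.tendsto' 0 _ (by simp)).mono_left nhdsWithin_le_nhds
  obtain ⟨δ, hδM, hδ₀, hδ₁⟩ :=
    ((hlim.eventually (gt_mem_nhds (lt_add_of_pos_right _ hκ))).and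
      (Ioo_mem_nhdsGT zero_lt_one)).exists
  refine ⟨(1 + δ⁻¹) ^ p, one_le_rpow (by simp [hδ₀.le]) hp₀, fun b => ?_⟩
  rcases le_or_gt |b| δ with hbδ | hbδ
  · have hb₁ : 0 < 1 + b := by linarith [neg_abs_le b]
    rw [abs_of_pos hb₁]
    have := one_add_rpow_le_of_abs_le hp hδ₀ hδ₁ hbδ
    have := mul_le_mul_of_nonneg_right hδM.le (sq_nonneg b)
    have : 0 ≤ (1 + δ⁻¹) ^ p * |b| ^ p := by positivity
    linarith
  · -- `1 + p b + C b²` is nonnegative because `C ≥ p² / 4`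
    have hquad : 0 ≤ 1 + p * b + (p * (p - 1) / 2 + κ) * b ^ 2 := by
      have : 0 ≤ (p * (p - 2) / 4 + κ) * b ^ 2 := mul_nonneg (by nlinarith) (sq_nonneg b)
      linear_combination sq_nonneg (1 + p * b / 2) + this
    have hlin : |1 + b| ≤ (1 + δ⁻¹) * |b| := by
      have : 1 ≤ δ⁻¹ * |b| := by rw [← div_eq_inv_mul, one_le_div hδ₀]; exact hbδ.le
      calc |1 + b| ≤ 1 + |b| := by simpa using abs_add_le 1 b
        _ ≤ (1 + δ⁻¹) * |b| := by linarith
    have : |1 + b| ^ p ≤ (1 + δ⁻¹) ^ p * |b| ^ p := by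
      rw [← mul_rpow (by positivity) (abs_nonneg b)]
      exact rpow_le_rpow (abs_nonneg _) hlin hp₀
    linarith

lemma abs_add_rpow_le_of_abs_one_add_rpow_le {p C c : ℝ} (hp : 0 < p) (hC : 0 ≤ C) (hc : 1 ≤ c)
    (h : ∀ b : ℝ, |1 + b| ^ p ≤ 1 + p * b + C * b ^ 2 + c * |b| ^ p) (a b : ℝ) :
    |a + b| ^ p ≤ |a| ^ p + p * (|a| ^ (p - 2) * a * b) + C * (|a| ^ (p - 2) * b ^ 2)
      + c * |b| ^ p := by
  rcases eq_or_ne a 0 with rfl | ha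
  · have : 0 ≤ C * (|0| ^ (p - 2) * b ^ 2) := by positivity
    simp only [zero_add, abs_zero, zero_rpow hp.ne', mul_zero, zero_mul] at this ⊢
    nlinarith [rpow_nonneg (abs_nonneg b) p]
  have hsplit : |a| ^ p = |a| ^ (p - 2) * a ^ 2 := by
    rw [rpow_sub (abs_pos.2 ha), rpow_two, sq_abs, div_mul_cancel₀ _ (by positivity)]
  have hscale : ∀ t, |a| ^ p * |t| ^ p = |a * t| ^ p := fun t => by
    rw [← mul_rpow (abs_nonneg a) (abs_nonneg t), abs_mul]
  calc |a + b| ^ p = |a| ^ p * |1 + b / a| ^ p := by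
        rw [hscale, mul_add, mul_one, mul_div_cancel₀ _ ha]
    _ ≤ |a| ^ p * (1 + p * (b / a) + C * (b / a) ^ 2 + c * |b / a| ^ p) :=
        mul_le_mul_of_nonneg_left (h _) (by positivity)
    _ = |a| ^ p + |a| ^ (p - 2) * a ^ 2 * (p * (b / a) + C * (b / a) ^ 2)
          + c * (|a| ^ p * |b / a| ^ p) := by rw [← hsplit]; ring
    _ = _ := by rw [hscale, mul_div_cancel₀ _ ha]; field_simp; ring

lemma exists_abs_add_rpow_le {p κ : ℝ} (hp : 2 ≤ p) (hκ : 0 < κ) :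
    ∃ c ≥ (1 : ℝ), ∀ a b : ℝ, |a + b| ^ p ≤ |a| ^ p + p * (|a| ^ (p - 2) * a * b)
      + (p * (p - 1) / 2 + κ) * (|a| ^ (p - 2) * b ^ 2) + c * |b| ^ p :=
  let ⟨c, hc, h⟩ := exists_abs_one_add_rpow_le hp hκ
  ⟨c, hc, abs_add_rpow_le_of_abs_one_add_rpow_le (by linarith) (by nlinarith) hc h⟩

section Integration

variable {α : Type*} {m : MeasurableSpace α} {μ : Measure α}

lemma memLp_abs_iff_integrable_abs_rpow {p : ℝ} (hp : 0 < p) {f : α → ℝ} :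
    MemLp (fun x => |f x|) (ENNReal.ofReal p) μ ↔ Integrable (fun x => |f x| ^ p) μ := by
  refine ⟨fun hf => ?_, fun hf => ?_⟩
  · simpa [ENNReal.toReal_ofReal hp.le] using
      hf.integrable_norm_rpow (by simpa using hp) ENNReal.ofReal_ne_top
  have hmeas : AEStronglyMeasurable (fun x => |f x|) μ := by
    refine ((continuous_rpow_const (inv_nonneg.2 hp.le)).comp_aestronglyMeasurable
      hf.aestronglyMeasurable).congr (Eventually.of_forall fun x => ?_)
    dsimp only
    rw [← rpow_mul (abs_nonneg _), mul_inv_cancel₀ hp.ne', rpow_one]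
  rw [← integrable_norm_rpow_iff hmeas (by simpa using hp) ENNReal.ofReal_ne_top]
  simpa [ENNReal.toReal_ofReal hp.le] using hf

lemma aemeasurable_abs_sub_of_aemeasurable_rpow_mul {q : ℝ} {u v : α → ℝ}
    (hu : AEMeasurable (fun x => |u x|) μ) (hv : AEMeasurable (fun x => |v x|) μ)
    (huv : AEMeasurable (fun x => |v x| ^ q * v x * (u x - v x)) μ) :
    AEMeasurable (fun x => |u x - v x|) μ := by
  obtain ⟨U, hUm, hU⟩ := hu
  obtain ⟨V, hVm, hV⟩ := hv
  obtain ⟨H, hHm, hH⟩ := huv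
  -- off the zero set of `v`, `|u - v|` is recovered from the product as `|H| / |v| ^ (q + 1)`
  refine ⟨fun x => if V x = 0 then U x else |H x| / V x ^ (q + 1),
    Measurable.ite (hVm (measurableSet_singleton 0)) hUm
      (hHm.abs.div (hVm.pow_const _)), ?_⟩
  filter_upwards [hU, hV, hH] with x hUx hVx hHx
  by_cases h0 : V x = 0
  · have : v x = 0 := abs_eq_zero.1 (hVx.trans h0)
    simp [h0, this, hUx]
  · have hpos : 0 < |v x| := hVx ▸ (abs_nonneg (v x)).lt_of_ne' (hVx ▸ h0)
    rw [if_neg h0, ← hHx, ← hVx, abs_mul, abs_mul, abs_of_pos (rpow_pos_of_pos hpos _),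
      rpow_add_one hpos.ne', mul_div_cancel_left₀ _ (by positivity)]

lemma memLp_abs_sub_of_aemeasurable_rpow_mul {p : ℝ≥0∞} {q : ℝ} {u v : α → ℝ}
    (hu : MemLp (fun x => |u x|) p μ) (hv : MemLp (fun x => |v x|) p μ)
    (huv : AEMeasurable (fun x => |v x| ^ q * v x * (u x - v x)) μ) :
    MemLp (fun x => |u x - v x|) p μ :=
  (hu.add hv).of_le
    (aemeasurable_abs_sub_of_aemeasurable_rpow_mul hu.1.aemeasurable hv.1.aemeasurable
      huv).aestronglyMeasurable
    (Eventually.of_forall fun x => by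
      simpa using (abs_sub (u x) (v x)).trans (le_abs_self _))

lemma integrable_and_integral_abs_rpow_mul_sq_le {p : ℝ} (hp : 2 < p) {f g : α → ℝ}
    (hf : MemLp f (ENNReal.ofReal p) μ) (hg : MemLp g (ENNReal.ofReal p) μ) :
    Integrable (fun x => |f x| ^ (p - 2) * g x ^ 2) μ ∧
      ∫ x, |f x| ^ (p - 2) * g x ^ 2 ∂μ
        ≤ (∫ x, |f x| ^ p ∂μ) ^ ((p - 2) / p) * (∫ x, |g x| ^ p ∂μ) ^ (2 / p) := by
  have hconj : (p / (p - 2)).HolderConjugate (p / 2) := by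
    rw [Real.holderConjugate_iff, one_lt_div (by linarith)]
    refine ⟨by linarith, ?_⟩
    field_simp
    ring
  have hf' : MemLp (fun x => ‖f x‖ ^ (p - 2)) (ENNReal.ofReal (p / (p - 2))) μ := by
    have := hf.norm_rpow_div (ENNReal.ofReal (p - 2))
    rwa [ENNReal.toReal_ofReal (by linarith), ← ENNReal.ofReal_div_of_pos (by linarith)] at this
  have hg' : MemLp (fun x => ‖g x‖ ^ (2 : ℝ)) (ENNReal.ofReal (p / 2)) μ := by
    have := hg.norm_rpow_div (ENNReal.ofReal 2)
    rwa [ENNReal.toReal_ofReal zero_le_two, ← ENNReal.ofReal_div_of_pos zero_lt_two] at this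
  have := hconj.ennrealOfReal
  have hint : ∀ x, ‖f x‖ ^ (p - 2) * ‖g x‖ ^ (2 : ℝ) = |f x| ^ (p - 2) * g x ^ 2 := by
    intro x
    rw [rpow_two, Real.norm_eq_abs, Real.norm_eq_abs, sq_abs]
  refine ⟨(hf'.integrable_mul hg').congr (Eventually.of_forall hint), ?_⟩
  have holder := integral_mul_norm_le_Lp_mul_Lq hconj hf' hg'
  have hpow : ∀ (t : ℝ) {r : ℝ}, 0 < r → ‖‖t‖ ^ r‖ ^ (p / r) = |t| ^ p := fun t r hr => by
    rw [norm_of_nonneg (by positivity), ← rpow_mul (norm_nonneg t), mul_div_cancel₀ _ hr.ne',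
      Real.norm_eq_abs]
  simp only [hpow _ (sub_pos.2 hp), hpow _ zero_lt_two, one_div_div] at holder
  simpa only [norm_of_nonneg (rpow_nonneg (norm_nonneg _) _), hint] using holder

end Integration

theorem integrated_taylor_upper_bound (p κ : ℝ) (hp : 2 < p) (hκ : 0 < κ) :
    ∃ c₁ > (0:ℝ), ∀ (α : Type) (m : MeasurableSpace α) (μ : Measure α),
      SigmaFinite μ → ∀ u vb : α → ℝ,
      Integrable (fun x => |u x| ^ p) μ →
      Integrable (fun x => |vb x| ^ p) μ →
      Integrable (fun x => |vb x| ^ (p - 2) * vb x * (u x - vb x)) μ →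
      (∫ x, |vb x| ^ (p - 2) * vb x * (u x - vb x) ∂μ) = 0 →
      (∫ x, |vb x| ^ p ∂μ) ^ (1/p) ≤ (∫ x, |u x| ^ p ∂μ) ^ (1/p) →
      (∫ x, |u x| ^ p ∂μ)
        ≤ (∫ x, |vb x| ^ p ∂μ)
          + (p * (p - 1) / 2 + κ) * (∫ x, |vb x| ^ p ∂μ) ^ ((p - 2)/p) *
              (∫ x, |u x - vb x| ^ p ∂μ) ^ (2/p)
          + c₁ * ∫ x, |u x - vb x| ^ p ∂μ := by
  obtain ⟨c, hc, hpt⟩ := exists_abs_add_rpow_le hp.le hκ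
  refine ⟨c, by linarith, fun α _ μ _ u vb hu hvb hcross hzero _ => ?_⟩
  have hC : 0 ≤ p * (p - 1) / 2 + κ := by nlinarith
  set C := p * (p - 1) / 2 + κ
  have hp₀ : 0 < p := by linarith
  have hvb' := (memLp_abs_iff_integrable_abs_rpow hp₀).2 hvb
  have hw := memLp_abs_sub_of_aemeasurable_rpow_mul
    ((memLp_abs_iff_integrable_abs_rpow hp₀).2 hu) hvb' hcross.aemeasurable
  have hwint := (memLp_abs_iff_integrable_abs_rpow hp₀).1 hw
  obtain ⟨hmid, hholder⟩ := integrable_and_integral_abs_rpow_mul_sq_le hp hvb' hw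
  simp only [abs_abs, sq_abs] at hmid hholder
  calc ∫ x, |u x| ^ p ∂μ
      ≤ ∫ x, |vb x| ^ p + p * (|vb x| ^ (p - 2) * vb x * (u x - vb x))
          + C * (|vb x| ^ (p - 2) * (u x - vb x) ^ 2) + c * |u x - vb x| ^ p ∂μ :=
        integral_mono hu (((hvb.add (hcross.const_mul p)).add (hmid.const_mul C)).add
          (hwint.const_mul c)) fun x => by simpa using hpt (vb x) (u x - vb x)
    _ = ∫ x, |vb x| ^ p ∂μ + C * ∫ x, |vb x| ^ (p - 2) * (u x - vb x) ^ 2 ∂μ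
          + c * ∫ x, |u x - vb x| ^ p ∂μ := by
        rw [integral_add ?_ (hwint.const_mul c), integral_add ?_ (hmid.const_mul C),
          integral_add hvb (hcross.const_mul p), integral_const_mul, integral_const_mul,
          integral_const_mul, hzero, mul_zero, add_zero]
        · exact hvb.add (hcross.const_mul p)
        · exact (hvb.add (hcross.const_mul p)).add (hmid.const_mul C)
    _ ≤ _ := by
        rw [mul_assoc]
        gcongr
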